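/- arXiv:1411.5741 — 2 statements merged into one kernel-verified Lean document; each statement's English description precedes it below -/
import Mathlib

section
/- Let q be a prime power, h ≥ 2 an integer, and θ a primitive element (generator of the multiplicative group) of F_{q^h}. Then the set B(q,h,θ) = {log_θ(θ + a) mod (q^h − 1) : a ∈ F_q} is a B_h set in Z/(q^h − 1)Z with exactly q elements. -/
/-! Bose–Chowla. If two multisets `s`, `t` of `h` elements of `F_q` give the same sum of
logarithms, then `∏_{a ∈ s} (θ + a) = ∏_{a ∈ t} (θ + a)`. The two monic polynomials
`∏ (X + a)` have degree `h`, so their difference has degree `< h` and vanishes at `θ`, whose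
minimal polynomial has degree `[F_{q^h} : F_q] = h` because `θ` generates `F_{q^h}`. Hence the
polynomials agree and `s = t` are read off as their roots. The same degree count (`h ≥ 2`) puts
`θ` outside `F_q`, so every `θ + a` is a unit. -/

/-- Additive `B_h[g]` property. -/
def IsBhg {G : Type*} [AddCommMonoid G] (A : Set G) (h g : ℕ) : Prop :=
  ∀ b : G, ∀ s : Finset (Multiset G),
    (∀ m ∈ s, Multiset.card m = h ∧ (∀ x ∈ m, x ∈ A) ∧ m.sum = b) → s.card ≤ g

open Polynomial Module
open scoped IntermediateField

theorem Multiset.exists_map_eq_of_forall_mem_range {α β : Type*} {f : α → β} {m : Multiset β}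
    (hm : ∀ x ∈ m, x ∈ Set.range f) : ∃ s : Multiset α, s.map f = m := by
  induction m using Multiset.induction with
  | empty => exact ⟨0, rfl⟩
  | cons x m ih =>
    obtain ⟨s, rfl⟩ := ih fun y hy => hm y (Multiset.mem_cons_of_mem hy)
    obtain ⟨a, rfl⟩ := hm x (Multiset.mem_cons_self _ _)
    exact ⟨a ::ₘ s, Multiset.map_cons _ _ _⟩

theorem isBhg_range_one_of_sum_map_inj {α G : Type*} [AddCommMonoid G] (f : α → G) (h : ℕ)
    (hf : ∀ s t : Multiset α, Multiset.card s = h → Multiset.card t = h →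
      (s.map f).sum = (t.map f).sum → s = t) :
    IsBhg (Set.range f) h 1 := by
  intro b S hS
  refine Finset.card_le_one.2 fun m₁ hm₁ m₂ hm₂ => ?_
  obtain ⟨hcard₁, hmem₁, hsum₁⟩ := hS m₁ hm₁
  obtain ⟨hcard₂, hmem₂, hsum₂⟩ := hS m₂ hm₂
  obtain ⟨s, rfl⟩ := Multiset.exists_map_eq_of_forall_mem_range hmem₁
  obtain ⟨t, rfl⟩ := Multiset.exists_map_eq_of_forall_mem_range hmem₂
  rw [Multiset.card_map] at hcard₁ hcard₂
  rw [hf s t hcard₁ hcard₂ (hsum₁.trans hsum₂.symm)]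

section Minpoly

variable {K E : Type*} [Field K] [CommRing E] [Algebra K E] {x : E} {s t : Multiset K}

theorem minpoly.eq_of_prod_sub_algebraMap_eq (hcard : Multiset.card s = Multiset.card t)
    (hdeg : Multiset.card s ≤ (minpoly K x).natDegree)
    (hprod : (s.map fun a => x - algebraMap K E a).prod =
      (t.map fun a => x - algebraMap K E a).prod) :
    s = t := by
  set P := (s.map fun a => X - C a).prod
  set Q := (t.map fun a => X - C a).prod
  suffices P = Q by simpa [P, Q] using congrArg roots this
  by_contra hPQ
  have hP : P.Monic := monic_multiset_prod_of_monic _ _ fun a _ => monic_X_sub_C a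
  have hQ : Q.Monic := monic_multiset_prod_of_monic _ _ fun a _ => monic_X_sub_C a
  have hPdeg : P.natDegree = Multiset.card s := natDegree_multiset_prod_X_sub_C_eq_card s
  have hQdeg : Q.natDegree = Multiset.card t := natDegree_multiset_prod_X_sub_C_eq_card t
  have hroot : Polynomial.aeval x (P - Q) = 0 := by
    simpa [P, Q, map_multiset_prod, Multiset.map_map, Function.comp_def, sub_eq_zero] using hprod
  have hlt : (P - Q).natDegree < P.natDegree :=
    natDegree_lt_natDegree (sub_ne_zero.2 hPQ) <| degree_sub_lt_left
      (by rw [degree_eq_natDegree hP.ne_zero, degree_eq_natDegree hQ.ne_zero, hPdeg, hQdeg,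
        hcard]) hP.ne_zero (by rw [hP.leadingCoeff, hQ.leadingCoeff])
  have hmin :=
    natDegree_le_natDegree (minpoly.degree_le_of_ne_zero K x (sub_ne_zero.2 hPQ) hroot)
  omega

theorem minpoly.eq_of_prod_add_algebraMap_eq (hcard : Multiset.card s = Multiset.card t)
    (hdeg : Multiset.card s ≤ (minpoly K x).natDegree)
    (hprod : (s.map fun a => x + algebraMap K E a).prod =
      (t.map fun a => x + algebraMap K E a).prod) :
    s = t := by
  refine Multiset.map_injective neg_injective
    (minpoly.eq_of_prod_sub_algebraMap_eq (x := x) ?_ ?_ ?_)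
  · simpa using hcard
  · simpa using hdeg
  · simpa [Multiset.map_map, Function.comp_def, sub_eq_add_neg] using hprod

end Minpoly

theorem IntermediateField.adjoin_simple_eq_top_of_forall_mem_zpowers {K E : Type*} [Field K]
    [Field E] [Algebra K E] {θ : Eˣ} (hθ : ∀ x : Eˣ, x ∈ Subgroup.zpowers θ) :
    K⟮(θ : E)⟯ = ⊤ := by
  rw [eq_top_iff]
  rintro x -
  obtain rfl | hx := eq_or_ne x 0
  · exact zero_mem _
  · obtain ⟨n, hn⟩ := hθ (Units.mk0 x hx)
    rw [← Units.val_mk0 hx, ← hn, Units.val_zpow_eq_zpow_val]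
    exact zpow_mem (mem_adjoin_simple_self K _) n

theorem minpoly.natDegree_eq_finrank_of_forall_mem_zpowers {K E : Type*} [Field K] [Field E]
    [Algebra K E] [FiniteDimensional K E] {θ : Eˣ}
    (hθ : ∀ x : Eˣ, x ∈ Subgroup.zpowers θ) :
    (minpoly K (θ : E)).natDegree = finrank K E :=
  (Field.primitive_element_iff_minpoly_natDegree_eq K _).1
    (IntermediateField.adjoin_simple_eq_top_of_forall_mem_zpowers hθ)

theorem Module.finrank_eq_of_card_eq_pow {K V : Type*} [Field K] [Fintype K] [AddCommGroup V]
    [Fintype V] [Module K V] {q h : ℕ} (hq : Fintype.card K = q)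
    (hV : Fintype.card V = q ^ h) : finrank K V = h := by
  have := card_eq_pow_finrank (K := K) (V := V)
  rw [hq, hV] at this
  exact Nat.pow_right_injective (hq ▸ Fintype.one_lt_card) this.symm

theorem setOf_exists_units_eq_range {α M G : Type*} [GroupWithZero M]
    {f : α → M} (hf : ∀ a, f a ≠ 0) (L : Mˣ → G) :
    {x : G | ∃ a, ∃ u : Mˣ, (u : M) = f a ∧ x = L u} =
      Set.range fun a => L (Units.mk0 (f a) (hf a)) := by
  ext x
  constructor
  · rintro ⟨a, u, hu, rfl⟩
    exact ⟨a, by rw [show u = Units.mk0 _ (hf a) from Units.ext hu]⟩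
  · rintro ⟨a, rfl⟩
    exact ⟨a, _, rfl, rfl⟩

theorem stmt_6_general {Fq E : Type*} [Field Fq] [Fintype Fq] [Field E] [Fintype E] [Algebra Fq E]
    (q h : ℕ) (hq : Fintype.card Fq = q) (hh : 2 ≤ h) (hcard : Fintype.card E = q ^ h)
    (θ : Eˣ) (hθ : ∀ x : Eˣ, x ∈ Subgroup.zpowers θ)
    -- `e` is the discrete logarithm to base `θ`
    (e : Eˣ ≃* Multiplicative (ZMod (q ^ h - 1))) :
    IsBhg {x : ZMod (q ^ h - 1) | ∃ a : Fq, ∃ u : Eˣ,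
        (u : E) = (θ : E) + algebraMap Fq E a ∧ x = Multiplicative.toAdd (e u)} h 1 ∧
    Set.ncard {x : ZMod (q ^ h - 1) | ∃ a : Fq, ∃ u : Eˣ,
        (u : E) = (θ : E) + algebraMap Fq E a ∧ x = Multiplicative.toAdd (e u)} = q := by
  have hdeg : (minpoly Fq (θ : E)).natDegree = h := by
    rw [minpoly.natDegree_eq_finrank_of_forall_mem_zpowers hθ,
      Module.finrank_eq_of_card_eq_pow hq hcard]
  have hθFq : (θ : E) ∉ (algebraMap Fq E).range :=
    (minpoly.two_le_natDegree_iff (.of_finite Fq _)).1 (hdeg ▸ hh)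
  have hne (a : Fq) : (θ : E) + algebraMap Fq E a ≠ 0 := fun h0 =>
    hθFq ⟨-a, by rw [map_neg, eq_neg_of_add_eq_zero_left h0]⟩
  simp only [setOf_exists_units_eq_range hne]
  set log : Fq → ZMod (q ^ h - 1) := fun a => Multiplicative.toAdd (e (Units.mk0 _ (hne a)))
  have hsum (s : Multiset Fq) : (s.map log).sum =
      Multiplicative.toAdd (e (s.map fun a => Units.mk0 _ (hne a)).prod) := by
    simp [log, map_multiset_prod, Multiset.map_map]
  have hlog_inj : log.Injective := fun a b hab => by
    simpa [log] using congrArg Units.val (e.injective (Multiplicative.toAdd.injective hab))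
  refine ⟨isBhg_range_one_of_sum_map_inj log h fun s t hs ht hst => ?_, ?_⟩
  · rw [hsum, hsum] at hst
    have hprod := congrArg (Units.coeHom E) (e.injective (Multiplicative.toAdd.injective hst))
    refine minpoly.eq_of_prod_add_algebraMap_eq (hs.trans ht.symm) (hs ▸ hdeg.ge) ?_
    simpa [map_multiset_prod, Multiset.map_map, Function.comp_def] using hprod
  · rw [Set.ncard_range_of_injective hlog_inj, Nat.card_eq_fintype_card, hq]

theorem stmt_6 {Fq E : Type*} [Field Fq] [Fintype Fq] [Field E] [Fintype E] [Algebra Fq E]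
    (q h : ℕ) (hq : Fintype.card Fq = q) (hh : 2 ≤ h) (hcard : Fintype.card E = q ^ h)
    (θ : Eˣ) (hθ : ∀ x : Eˣ, x ∈ Subgroup.zpowers θ)
    -- `e` is the discrete logarithm to base `θ`
    (e : Eˣ ≃* Multiplicative (ZMod (q ^ h - 1)))
    (he : e θ = Multiplicative.ofAdd 1) :
    IsBhg {x : ZMod (q ^ h - 1) | ∃ a : Fq, ∃ u : Eˣ,
        (u : E) = (θ : E) + algebraMap Fq E a ∧ x = Multiplicative.toAdd (e u)} h 1 ∧
    Set.ncard {x : ZMod (q ^ h - 1) | ∃ a : Fq, ∃ u : Eˣ,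
        (u : E) = (θ : E) + algebraMap Fq E a ∧ x = Multiplicative.toAdd (e u)} = q :=
  stmt_6_general q h hq hh hcard θ hθ e
end

section
/- For every positive integer g, every prime power q, and integer h ≥ 2, if there exists a positive integer d dividing h with d ≠ h and q^d ≡ 1 (mod g), then there exists a B_h[g] set in Z/((q^h − 1)/g)Z with exactly q elements. -/
/-!
Bose–Chowla. Let `F = 𝔽_q ⊆ K = 𝔽_{q^h}` and let `θ` generate the cyclic group `Kˣ` of order
`q^h - 1`. A product of `h` factors `θ - r` with `r ∈ F` determines the factors, since `θ` has
degree `h` over `F`; so the discrete logarithms of the `θ - r` form a `B_h` set in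
`ℤ/(q^h - 1)`. Reducing modulo `(q^h - 1)/g` identifies at most `g` logarithms, as its kernel
consists of logarithms of `g`-th roots of unity, and keeps the `q` logarithms apart: if
`((θ - r₁)/(θ - r₂))^g = 1` then, as `g ∣ q^d - 1`, this quotient lies in `𝔽_{q^d}`, which forces
`θ ∈ 𝔽_{q^d}` unless `r₁ = r₂`.
-/

open Polynomial

theorem Multiset.exists_map_eq_of_forall_mem_image {α β : Type*} {f : α → β} {A : Set α}
    {m : Multiset β} (hm : ∀ x ∈ m, x ∈ f '' A) :
    ∃ t : Multiset α, (∀ a ∈ t, a ∈ A) ∧ t.map f = m := by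
  induction m using Multiset.induction_on with
  | empty => exact ⟨0, by simp, rfl⟩
  | cons b m ih =>
    obtain ⟨a, ha, rfl⟩ := hm _ (mem_cons_self _ m)
    obtain ⟨t, htA, rfl⟩ := ih fun x hx => hm x (mem_cons_of_mem hx)
    exact ⟨a ::ₘ t, forall_mem_cons.2 ⟨ha, htA⟩, map_cons f a t⟩

theorem AddMonoidHom.card_le_natCard_ker_of_forall_apply_eq {G H : Type*} [AddGroup G] [Finite G]
    [AddGroup H] (f : G →+ H) {T : Finset G} {b : H} (hT : ∀ y ∈ T, f y = b) :
    T.card ≤ Nat.card f.ker := by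
  obtain rfl | ⟨y₀, hy₀⟩ := T.eq_empty_or_nonempty
  · simp
  let shift : T → f.ker := fun y => ⟨y - y₀, by rw [mem_ker, map_sub, hT _ y.2, hT _ hy₀, sub_self]⟩
  have hshift : Function.Injective shift := fun y z hyz =>
    Subtype.ext (sub_left_injective (congrArg Subtype.val hyz))
  simpa using Nat.card_le_card_of_injective shift hshift

open Finset in
theorem IsBhg.image {G H : Type*} [AddCommGroup G] [Finite G] [AddCommGroup H] {A : Set G}
    {h g₁ g₂ : ℕ} (hA : IsBhg A h g₁) (f : G →+ H)
    (hker : Nat.card f.ker ≤ g₂) : IsBhg (f '' A) h (g₁ * g₂) := by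
  classical
  intro b s hs
  choose! lift hliftA hlift using fun m (hm : m ∈ s) =>
    Multiset.exists_map_eq_of_forall_mem_image (hs m hm).2.1
  set S := s.image lift
  have hS : #S = #s := card_image_of_injOn fun m₁ hm₁ m₂ hm₂ heq => by
    rw [← hlift m₁ hm₁, ← hlift m₂ hm₂, heq]
  have hfibre : ∀ y ∈ S.image Multiset.sum, #{t ∈ S | t.sum = y} ≤ g₁ := by
    refine fun y _ => hA y _ fun t ht => ?_
    obtain ⟨htS, rfl⟩ := mem_filter.1 ht
    obtain ⟨m, hm, rfl⟩ := mem_image.1 htS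
    exact ⟨by rw [← Multiset.card_map f, hlift m hm, (hs m hm).1], hliftA m hm, rfl⟩
  have hsums : #(S.image Multiset.sum) ≤ g₂ := by
    refine (f.card_le_natCard_ker_of_forall_apply_eq (b := b) ?_).trans hker
    simp only [S, mem_image]
    rintro _ ⟨_, ⟨m, hm, rfl⟩, rfl⟩
    rw [map_multiset_sum, hlift m hm, (hs m hm).2.2]
  calc #s = #S := hS.symm
    _ ≤ g₁ * #(S.image Multiset.sum) := card_le_mul_card_image S g₁ hfibre
    _ ≤ g₁ * g₂ := Nat.mul_le_mul_left g₁ hsums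

theorem ZMod.nsmul_eq_zero_of_castHom_eq_zero {n g : ℕ} (hg : g ∣ n) {y : ZMod n}
    (hy : ZMod.castHom (Nat.div_dvd_of_dvd hg) (ZMod (n / g)) y = 0) : g • y = 0 := by
  obtain ⟨k, rfl⟩ := ZMod.intCast_surjective y
  rw [map_intCast, ZMod.intCast_zmod_eq_zero_iff_dvd] at hy
  obtain ⟨j, rfl⟩ := hy
  have hng : ((n / g : ℕ) : ℤ) * g = n := by exact_mod_cast Nat.div_mul_cancel hg
  rw [nsmul_eq_mul, ← Int.cast_natCast, ← Int.cast_mul, ZMod.intCast_zmod_eq_zero_iff_dvd]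
  exact ⟨j, by linear_combination j * hng⟩

theorem IsCyclic.exists_addMonoidHom_zmod_div {G : Type*} [CommGroup G] [IsCyclic G] {g : ℕ}
    (hg : g ∣ Nat.card G) :
    ∃ ψ : Additive G →+ ZMod (Nat.card G / g), ∀ x, ψ x = 0 → x.toMul ^ g = 1 := by
  let e : ZMod (Nat.card G) ≃+ Additive G :=
    zmodAddCyclicAddEquiv (G := Additive G) (isAddCyclic_additive_iff.2 inferInstance)
  refine ⟨(ZMod.castHom (Nat.div_dvd_of_dvd hg) _).toAddMonoidHom.comp e.symm.toAddMonoidHom,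
    fun x hx => ?_⟩
  have : g • e.symm x = 0 := ZMod.nsmul_eq_zero_of_castHom_eq_zero hg hx
  rw [← map_nsmul, AddEquiv.map_eq_zero_iff] at this
  rw [← toMul_nsmul, this, toMul_zero]

theorem Multiset.eq_of_prod_map_sub_algebraMap_eq {F K : Type*} [Field F] [CommRing K]
    [Algebra F K] {θ : K} {s t : Multiset F} (hst : card s = card t)
    (hdeg : card s ≤ (minpoly F θ).natDegree)
    (h : (s.map fun a => θ - algebraMap F K a).prod = (t.map fun a => θ - algebraMap F K a).prod) :
    s = t := by
  have haeval : ∀ u : Multiset F,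
      aeval θ (u.map fun a => X - C a).prod = (u.map fun a => θ - algebraMap F K a).prod := by
    intro u
    simp [map_multiset_prod, Multiset.map_map]
  set P := (s.map fun a => X - C a).prod
  set Q := (t.map fun a => X - C a).prod
  have hP : P.Monic := monic_multiset_prod_of_monic _ _ fun a _ => monic_X_sub_C a
  have hQ : Q.Monic := monic_multiset_prod_of_monic _ _ fun a _ => monic_X_sub_C a
  have hPQdeg : P.natDegree = Q.natDegree := by
    rw [natDegree_multiset_prod_X_sub_C_eq_card, natDegree_multiset_prod_X_sub_C_eq_card, hst]
  have hPQ : P = Q := by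
    by_contra hne
    have hlt : (P - Q).degree < P.degree := degree_sub_lt_left
      (by rw [degree_eq_natDegree hP.ne_zero, degree_eq_natDegree hQ.ne_zero, hPQdeg])
      hP.ne_zero (by rw [hP.leadingCoeff, hQ.leadingCoeff])
    have hmin := natDegree_le_natDegree <| minpoly.degree_le_of_ne_zero F θ (sub_ne_zero.2 hne)
      (by rw [map_sub, haeval, haeval, h, sub_self])
    have := natDegree_lt_natDegree (sub_ne_zero.2 hne) hlt
    rw [natDegree_multiset_prod_X_sub_C_eq_card] at this
    omega
  rw [← roots_multiset_prod_X_sub_C s, ← roots_multiset_prod_X_sub_C t]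
  exact congrArg roots hPQ

theorem isBhg_range_of_le_natDegree_minpoly {F K : Type*} [Field F] [Field K] [Algebra F K]
    {θ : K} {h : ℕ} (hh : h ≤ (minpoly F θ).natDegree) (u : F → Additive Kˣ)
    (hu : ∀ r, ((u r).toMul : K) = θ - algebraMap F K r) : IsBhg (Set.range u) h 1 := by
  intro b s hs
  refine Finset.card_le_one.2 fun m₁ hm₁ m₂ hm₂ => ?_
  obtain ⟨hcard₁, hmem₁, hsum₁⟩ := hs m₁ hm₁
  obtain ⟨hcard₂, hmem₂, hsum₂⟩ := hs m₂ hm₂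
  rw [← Set.image_univ] at hmem₁ hmem₂
  obtain ⟨t₁, -, rfl⟩ := Multiset.exists_map_eq_of_forall_mem_image hmem₁
  obtain ⟨t₂, -, rfl⟩ := Multiset.exists_map_eq_of_forall_mem_image hmem₂
  have hprod : ∀ t : Multiset F, (((t.map u).sum.toMul : Kˣ) : K) =
      (t.map fun a => θ - algebraMap F K a).prod := by
    intro t
    rw [toMul_multiset_sum, ← Units.coeHom_apply, map_multiset_prod]
    simp [Multiset.map_map, Function.comp_def, hu]
  rw [Multiset.card_map] at hcard₁ hcard₂
  congr 1
  refine Multiset.eq_of_prod_map_sub_algebraMap_eq (hcard₁.trans hcard₂.symm) (hcard₁ ▸ hh) ?_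
  rw [← hprod, ← hprod, hsum₁, hsum₂]

namespace FiniteField

variable {F K : Type*} [Field F] [Finite F] [Field K] [Algebra F K]

theorem exists_algHom_apply_eq_pow_card_pow (d : ℕ) :
    ∃ σ : K →ₐ[F] K, ∀ x, σ x = x ^ Nat.card F ^ d := by
  have := Fintype.ofFinite F
  refine ⟨frobeniusAlgHom F K ^ d, fun x => ?_⟩
  simp only [AlgHom.coe_pow, coe_frobeniusAlgHom, pow_iterate, Nat.card_eq_fintype_card]

variable {θ : K} {d : ℕ}

theorem sub_algebraMap_ne_zero (hθ : θ ^ Nat.card F ^ d ≠ θ) (r : F) :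
    θ - algebraMap F K r ≠ 0 := by
  obtain ⟨σ, hσ⟩ := exists_algHom_apply_eq_pow_card_pow (F := F) (K := K) d
  rw [sub_ne_zero]
  rintro rfl
  exact hθ (by rw [← hσ, AlgHom.commutes])

theorem eq_of_sub_algebraMap_pow_eq (hθ : θ ^ Nat.card F ^ d ≠ θ) {g : ℕ}
    (hg : g ∣ Nat.card F ^ d - 1) {r₁ r₂ : F}
    (h : (θ - algebraMap F K r₁) ^ g = (θ - algebraMap F K r₂) ^ g) : r₁ = r₂ := by
  obtain ⟨σ, hσ⟩ := exists_algHom_apply_eq_pow_card_pow (F := F) (K := K) d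
  have hne := sub_algebraMap_ne_zero hθ r₂
  set c := (θ - algebraMap F K r₁) / (θ - algebraMap F K r₂)
  have hc : c * (θ - algebraMap F K r₂) = θ - algebraMap F K r₁ := div_mul_cancel₀ _ hne
  have hcg : c ^ g = 1 := by rw [div_pow, h, div_self (pow_ne_zero g hne)]
  have hσc : σ c = c := by
    obtain ⟨k, hk⟩ := hg
    have hpos : 0 < Nat.card F ^ d := Nat.pos_of_ne_zero (pow_ne_zero d Nat.card_pos.ne')
    rw [hσ, ← Nat.sub_add_cancel hpos, pow_succ, hk, pow_mul, hcg, one_pow, one_mul]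
  by_cases hc1 : c = 1
  · rw [hc1, one_mul, sub_right_inj] at hc
    exact (algebraMap F K).injective hc.symm
  have hθc : θ * (1 - c) = algebraMap F K r₁ - c * algebraMap F K r₂ := by
    linear_combination -hc
  have hσθ : σ θ * (1 - c) = θ * (1 - c) := by
    have := congrArg σ hθc
    simp only [map_mul, map_sub, map_one, hσc, AlgHom.commutes] at this
    rw [this, hθc]
  exact absurd (hσ θ ▸ mul_right_cancel₀ (sub_ne_zero.2 (Ne.symm hc1)) hσθ) hθ

end FiniteField

namespace IsPrimitiveRoot

variable {K : Type*} [Field K] [Finite K] {θ : K}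

theorem adjoin_eq_top (F : Type*) [Field F] [Algebra F K] (hθ : IsPrimitiveRoot θ (Nat.card Kˣ)) :
    IntermediateField.adjoin F {θ} = ⊤ := by
  have : NeZero (Nat.card Kˣ) := ⟨Nat.card_pos.ne'⟩
  refine eq_top_iff.2 fun x _ => ?_
  obtain rfl | hx := eq_or_ne x 0
  · exact zero_mem _
  obtain ⟨i, -, rfl⟩ := hθ.eq_pow_of_pow_eq_one (ξ := x)
    (by rw [← Units.val_mk0 hx, ← Units.val_pow_eq_pow_val, pow_card_eq_one', Units.val_one])
  exact pow_mem (IntermediateField.mem_adjoin_simple_self F θ) i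

theorem pow_ne_self_of_lt {n : ℕ} (hθ : IsPrimitiveRoot θ (Nat.card Kˣ)) (hn : 1 < n)
    (hnK : n < Nat.card K) : θ ^ n ≠ θ := by
  have hθ0 : θ ≠ 0 := hθ.ne_zero Nat.card_pos.ne'
  intro h
  refine hθ.pow_ne_one_of_pos_of_lt (l := n - 1) (by omega) (by rw [Nat.card_units]; omega) ?_
  rw [← mul_left_inj' hθ0, ← pow_succ, Nat.sub_add_cancel (by omega), h, one_mul]

end IsPrimitiveRoot

theorem FiniteField.exists_isBhg_zmod_card_sub_one_div {F K : Type*} [Field F] [Finite F]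
    [Field K] [Finite K] [Algebra F K] {d g : ℕ} (hd : 0 < d) (hdK : d < Module.finrank F K)
    (hgd : g ∣ Nat.card F ^ d - 1) (hgK : g ∣ Nat.card K - 1) :
    ∃ A : Set (ZMod ((Nat.card K - 1) / g)),
      IsBhg A (Module.finrank F K) g ∧ A.ncard = Nat.card F := by
  obtain ⟨θ, hθ⟩ : ∃ θ : K, IsPrimitiveRoot θ (Nat.card Kˣ) := by
    obtain ⟨u, hu⟩ := IsCyclic.exists_ofOrder_eq_natCard (α := Kˣ)
    exact ⟨u, IsPrimitiveRoot.coe_units_iff.2 (hu ▸ IsPrimitiveRoot.orderOf u)⟩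
  have hdeg : (minpoly F θ).natDegree = Module.finrank F K :=
    (Field.primitive_element_iff_minpoly_natDegree_eq F θ).1 (hθ.adjoin_eq_top F)
  have hq : 1 < Nat.card F := Finite.one_lt_card
  have hθd : θ ^ Nat.card F ^ d ≠ θ := by
    refine hθ.pow_ne_self_of_lt (Nat.one_lt_pow hd.ne' hq) ?_
    rw [Module.natCard_eq_pow_finrank (K := F) (V := K)]
    exact Nat.pow_lt_pow_right hq hdK
  let u : F → Additive Kˣ := fun r =>
    .ofMul (Units.mk0 _ (FiniteField.sub_algebraMap_ne_zero hθd r))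
  have hu : Function.Injective u := fun r₁ r₂ h => (algebraMap F K).injective <| by
    simpa [u] using congrArg (fun x : Additive Kˣ => (x.toMul : K)) h
  rw [← Nat.card_units K] at hgK ⊢
  obtain ⟨ψ, hψ⟩ := IsCyclic.exists_addMonoidHom_zmod_div hgK
  have : NeZero g := ⟨by
    rintro rfl
    rw [zero_dvd_iff, Nat.sub_eq_zero_iff_le] at hgd
    exact (Nat.one_lt_pow hd.ne' hq).not_ge hgd⟩
  have hker : Nat.card ψ.ker ≤ g := by
    let toRoot : ψ.ker → rootsOfUnity g K := fun x =>
      ⟨x.1.toMul, (mem_rootsOfUnity _ _).2 (hψ _ x.2)⟩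
    have htoRoot : Function.Injective toRoot := fun x y hxy =>
      Subtype.ext (Additive.toMul.injective (Subtype.mk.inj hxy))
    exact (Nat.card_le_card_of_injective toRoot htoRoot).trans (card_rootsOfUnity K g)
  have hinj : Set.InjOn ψ (Set.range u) := by
    rintro _ ⟨r₁, rfl⟩ _ ⟨r₂, rfl⟩ h
    have hpow := hψ (u r₁ - u r₂) (by rw [map_sub, h, sub_self])
    rw [toMul_sub, div_pow, div_eq_one] at hpow
    exact congrArg u (FiniteField.eq_of_sub_algebraMap_pow_eq hθd hgd
      (by simpa [u] using congrArg Units.val hpow))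
  refine ⟨ψ '' Set.range u, ?_, ?_⟩
  · simpa using (isBhg_range_of_le_natDegree_minpoly hdeg.ge u fun r => rfl).image ψ hker
  · rw [hinj.ncard_image, Set.ncard_range_of_injective hu]

theorem stmt_15_general (g q h : ℕ) (hq : IsPrimePow q) (hh : 2 ≤ h)
    (hd : ∃ d : ℕ, 0 < d ∧ d ∣ h ∧ d ≠ h ∧ q ^ d ≡ 1 [MOD g]) :
    ∃ A : Set (ZMod ((q ^ h - 1) / g)), IsBhg A h g ∧ A.ncard = q := by
  obtain ⟨p, e, hp, he, rfl⟩ := hq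
  obtain ⟨d, hd, hdh, hdne, hmod⟩ := hd
  have : Fact p.Prime := ⟨hp.nat_prime⟩
  have : NeZero h := ⟨by omega⟩
  let F := GaloisField p e
  let K := FiniteField.Extension F p h
  have hF : Nat.card F = p ^ e := GaloisField.card p e he.ne'
  have hK : Nat.card K = Nat.card F ^ h := FiniteField.natCard_extension F p h
  have hFK : Module.finrank F K = h := FiniteField.finrank_extension F p h
  have hgd : g ∣ (p ^ e) ^ d - 1 :=
    (Nat.modEq_iff_dvd' (Nat.one_le_pow _ _ (pow_pos hp.nat_prime.pos e))).1 hmod.symm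
  have hgh : g ∣ (p ^ e) ^ h - 1 := by
    obtain ⟨k, rfl⟩ := hdh
    exact hgd.trans (by simpa [pow_mul] using Nat.sub_dvd_pow_sub_pow ((p ^ e) ^ d) 1 k)
  have hdK : d < Module.finrank F K := by
    rw [hFK]
    exact lt_of_le_of_ne (Nat.le_of_dvd (by omega) hdh) hdne
  have := FiniteField.exists_isBhg_zmod_card_sub_one_div hd hdK (hF ▸ hgd) (by rwa [hK, hF])
  rwa [hK, hFK, hF] at this

theorem stmt_15 (g q h : ℕ) (hg : 1 ≤ g) (hq : IsPrimePow q) (hh : 2 ≤ h)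
    (hd : ∃ d : ℕ, 0 < d ∧ d ∣ h ∧ d ≠ h ∧ q ^ d ≡ 1 [MOD g]) :
    ∃ A : Set (ZMod ((q ^ h - 1) / g)), IsBhg A h g ∧ A.ncard = q :=
  stmt_15_general g q h hq hh hd
end
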